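/- Let F : ℝ^d → ℝ be twice differentiable with L₂-Lipschitz Hessian, fix x ∈ ℝ^d, M ≥ 4L₂ and η > 0, and let (Ω, 𝔽, P) be a probability space. Let g : Ω → ℝ^d and H : Ω → S^d (symmetric d×d matrices) be random variables with E‖∇F(x) − g‖² < ∞ and E‖∇²F(x) − H‖_op² < ∞, and let y : Ω → ℝ^d be a measurable map such that for every ω, y(ω) minimizes z ↦ F(x) + ⟨g(ω), z − x⟩ + (1/2)⟨z − x, H(ω)(z − x)⟩ + (M/6)‖z − x‖³ over the closed ball of radius η around x; assume F∘y is integrable. Then E[F(x) − F(y)] ≥ (Mη³/60)·P(‖∇F(y)‖ ≥ Mη²/2) − (9/√M)·(E‖∇F(x) − g‖²)^{3/4} − (5η^{3/2}/√M)·(E‖∇²F(x) − H‖_op²)^{3/4}. -/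

import Mathlib

/-!
Fix a sample and write `v = y - x`, `s = ‖v‖`, `δg = ‖∇F(x) - g‖`, `δH = ‖∇²F(x) - H‖`.
Since `y` beats `x` in the model, the cubic Taylor bound
`F(y) ≤ F(x) + ⟪∇F(x), v⟫ + ½⟪v, ∇²F(x) v⟫ + (L₂/3) s³` together with `M ≥ 4 L₂` gives
`F(x) - F(y) ≥ M s³/24 - δg s - δH s²/2`. If moreover `‖∇F(y)‖ ≥ Mη²/2`, then either `s = η`,
or `y` is an interior minimizer, hence a stationary point of the model, and in both cases
`δg + δH s + (3/4) M s² ≥ Mη²/2`. After rescaling by `η` and `√M`, an elementary cubic inequality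
(Young's inequality plus a case split) turns this into the pointwise bound
`F(x) - F(y) ≥ (Mη³/60) 1[‖∇F(y)‖ ≥ Mη²/2] - 9 δg^{3/2}/√M - 5 η^{3/2} δH^{3/2}/√M`.
Taking expectations, Markov's inequality handles the indicator and Jensen's inequality for the
concave map `t ↦ t^{3/4}` handles the error terms.
-/

open MeasureTheory
open scoped RealInnerProductSpace

-- The pointwise descent bound in units of `M η³`, see `descentPoly_rescale`.
noncomputable def descentPoly (s u v : ℝ) : ℝ :=
  s ^ 3 / 24 + 9 * u ^ 3 + 5 * v ^ 3 - u ^ 2 * s - v ^ 2 * s ^ 2 / 2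

theorem descentPoly_nonneg {s u v : ℝ} (hs0 : 0 ≤ s) (hs1 : s ≤ 1) (hu : 0 ≤ u) (hv : 0 ≤ v) :
    0 ≤ descentPoly s u v := by
  have h1 : s ^ 3 ≤ 1 := pow_le_one₀ hs0 hs1
  unfold descentPoly
  nlinarith [mul_nonneg (sq_nonneg (4 * u - s)) (by linarith : (0 : ℝ) ≤ 8 * u + s),
    mul_nonneg (sq_nonneg (3 * v - s ^ 2)) (by positivity : (0 : ℝ) ≤ 6 * v + s ^ 2),
    mul_nonneg (mul_nonneg (mul_nonneg hs0 hs0) hs0) (by linarith : (0 : ℝ) ≤ 1 - s ^ 3)]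

theorem one_div_sixty_le_descentPoly {s u v : ℝ} (hs0 : 0 ≤ s) (hs1 : s ≤ 1) (hu : 0 ≤ u)
    (hv : 0 ≤ v) (hc : 1 / 2 ≤ u ^ 2 + v ^ 2 * s + 3 / 4 * s ^ 2) :
    1 / 60 ≤ descentPoly s u v := by
  have hs3 : s ^ 3 ≤ 1 := pow_le_one₀ hs0 hs1
  have hs6 : s ^ 6 ≤ s ^ 3 := by nlinarith [pow_nonneg hs0 3]
  -- Young's inequality, weighted to use up exactly the terms `9 u³` and `5 v³`
  have hyoung_u : u ^ 2 * s ≤ 9 * u ^ 3 + 4 / 2187 * s ^ 3 := by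
    nlinarith [mul_nonneg (sq_nonneg (27 * u - 2 * s)) (by linarith : (0 : ℝ) ≤ 27 * u + s)]
  have hyoung_v : v ^ 2 * s ^ 2 / 2 ≤ 5 * v ^ 3 + s ^ 6 / 1350 := by
    nlinarith [mul_nonneg (sq_nonneg (15 * v - s ^ 2)) (by positivity : (0 : ℝ) ≤ 30 * v + s ^ 2)]
  unfold descentPoly
  rcases le_or_gt (19 / 25) s with hs | hs
  · have : (6859 : ℝ) / 15625 ≤ s ^ 3 := by nlinarith
    linarith
  · have hc' : 167 / 2500 ≤ u ^ 2 + v ^ 2 * s := by nlinarith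
    rcases le_or_gt (167 / 5000 : ℝ) (u ^ 2) with h | h
    · have hu' : (9 : ℝ) / 50 ≤ u := by nlinarith
      nlinarith [mul_nonneg (sq_nonneg u) (by linarith : (0 : ℝ) ≤ u - 9 / 50),
        mul_nonneg (sq_nonneg u) (by linarith : (0 : ℝ) ≤ 19 / 25 - s), pow_nonneg hs0 3]
    · have hv2 : 835 / 19000 ≤ v ^ 2 := by nlinarith [mul_nonneg (mul_nonneg hv hv) hs0]
      have hv' : (1 : ℝ) / 5 ≤ v := by nlinarith
      nlinarith [mul_nonneg (sq_nonneg v) (by linarith : (0 : ℝ) ≤ v - 1 / 5),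
        mul_nonneg (sq_nonneg v) (by nlinarith : (0 : ℝ) ≤ 361 / 625 - s ^ 2), pow_nonneg hs0 3]

theorem sq_sq_rpow_three_fourths {u : ℝ} (hu : 0 ≤ u) : ((u ^ 2) ^ 2) ^ ((3 : ℝ) / 4) = u ^ 3 := by
  rw [← pow_mul, ← Real.rpow_natCast, ← Real.rpow_mul (by positivity), ← Real.rpow_natCast]
  norm_num

theorem descentPoly_rescale {M η s a b : ℝ} (hM : 0 < M) (hη : 0 < η) (ha : 0 ≤ a) (hb : 0 ≤ b) :
    M * η ^ 3 * descentPoly (s / η) (√a / (√M * η)) (√b / (√M * √η)) =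
      M * s ^ 3 / 24 - a * s - b * s ^ 2 / 2 + 9 / √M * (a ^ 2) ^ ((3 : ℝ) / 4)
        + 5 * η ^ ((3 : ℝ) / 2) / √M * (b ^ 2) ^ ((3 : ℝ) / 4) := by
  obtain ⟨u, hu, rfl⟩ : ∃ u, 0 ≤ u ∧ a = u ^ 2 := ⟨√a, by positivity, (Real.sq_sqrt ha).symm⟩
  obtain ⟨v, hv, rfl⟩ : ∃ v, 0 ≤ v ∧ b = v ^ 2 := ⟨√b, by positivity, (Real.sq_sqrt hb).symm⟩
  obtain ⟨m, hm, rfl⟩ : ∃ m, 0 < m ∧ M = m ^ 2 := ⟨√M, by positivity, (Real.sq_sqrt hM.le).symm⟩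
  obtain ⟨e, he, rfl⟩ : ∃ e, 0 < e ∧ η = e ^ 2 := ⟨√η, by positivity, (Real.sq_sqrt hη.le).symm⟩
  have he32 : (e ^ 2) ^ ((3 : ℝ) / 2) = e ^ 3 := by
    rw [← Real.rpow_natCast, ← Real.rpow_mul he.le]; norm_num
  rw [Real.sqrt_sq hu, Real.sqrt_sq hv, Real.sqrt_sq hm.le, Real.sqrt_sq he.le,
    sq_sq_rpow_three_fourths hu, sq_sq_rpow_three_fourths hv, he32]
  unfold descentPoly
  field_simp
  ring

theorem cubic_descent_bound {M η s a b : ℝ} (hM : 0 < M) (hη : 0 < η) (hs0 : 0 ≤ s)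
    (hsη : s ≤ η) (ha : 0 ≤ a) (hb : 0 ≤ b) :
    -(9 / √M * (a ^ 2) ^ ((3 : ℝ) / 4)) - 5 * η ^ ((3 : ℝ) / 2) / √M * (b ^ 2) ^ ((3 : ℝ) / 4)
      ≤ M * s ^ 3 / 24 - a * s - b * s ^ 2 / 2 := by
  have h := mul_nonneg (by positivity : 0 ≤ M * η ^ 3)
    (descentPoly_nonneg (s := s / η) (u := √a / (√M * η)) (v := √b / (√M * √η))
      (by positivity) ((div_le_one hη).2 hsη) (by positivity) (by positivity))
  rw [descentPoly_rescale hM hη ha hb] at h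
  linarith

theorem cubic_descent_bound_of_le {M η s a b : ℝ} (hM : 0 < M) (hη : 0 < η) (hs0 : 0 ≤ s)
    (hsη : s ≤ η) (ha : 0 ≤ a) (hb : 0 ≤ b) (hc : M * η ^ 2 / 2 ≤ a + b * s + 3 / 4 * M * s ^ 2) :
    M * η ^ 3 / 60 - 9 / √M * (a ^ 2) ^ ((3 : ℝ) / 4)
        - 5 * η ^ ((3 : ℝ) / 2) / √M * (b ^ 2) ^ ((3 : ℝ) / 4)
      ≤ M * s ^ 3 / 24 - a * s - b * s ^ 2 / 2 := by
  have hc' :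
      1 / 2 ≤ (√a / (√M * η)) ^ 2 + (√b / (√M * √η)) ^ 2 * (s / η) + 3 / 4 * (s / η) ^ 2 := by
    rw [div_pow, div_pow, mul_pow, mul_pow, Real.sq_sqrt ha, Real.sq_sqrt hb, Real.sq_sqrt hM.le,
      Real.sq_sqrt hη.le]
    have hsum : a / (M * η ^ 2) + b / (M * η) * (s / η) + 3 / 4 * (s / η) ^ 2
        = (a + b * s + 3 / 4 * M * s ^ 2) / (M * η ^ 2) := by
      field_simp
    rw [hsum, le_div_iff₀ (by positivity)]
    linarith
  have h := mul_le_mul_of_nonneg_left (one_div_sixty_le_descentPoly (by positivity)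
    ((div_le_one hη).2 hsη) (by positivity) (by positivity) hc') (by positivity : 0 ≤ M * η ^ 3)
  rw [descentPoly_rescale hM hη ha hb] at h
  linarith

theorem norm_sub_sub_apply_le_of_lipschitz_fderiv {E F : Type*}
    [NormedAddCommGroup E] [NormedSpace ℝ E] [NormedAddCommGroup F] [NormedSpace ℝ F]
    {f : E → F} {f' : E → E →L[ℝ] F} {L : ℝ} (hf : ∀ z, HasFDerivAt f (f' z) z)
    (hlip : ∀ z w, ‖f' z - f' w‖ ≤ L * ‖z - w‖) (hL : 0 ≤ L) (a b : E) :
    ‖f b - f a - f' a (b - a)‖ ≤ L * ‖b - a‖ ^ 2 := by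
  have hbound : ∀ z ∈ segment ℝ a b, ‖f' z - f' a‖ ≤ L * ‖b - a‖ := fun z hz =>
    (hlip z a).trans (mul_le_mul_of_nonneg_left (norm_sub_le_of_mem_segment hz) hL)
  calc ‖f b - f a - f' a (b - a)‖ ≤ L * ‖b - a‖ * ‖b - a‖ :=
        (convex_segment a b).norm_image_sub_le_of_norm_hasFDerivWithin_le'
          (fun z _ => (hf z).hasFDerivWithinAt) hbound
          (left_mem_segment ℝ a b) (right_mem_segment ℝ a b)
    _ = L * ‖b - a‖ ^ 2 := by ring

section NormedSpace

variable {E : Type*} [NormedAddCommGroup E] [NormedSpace ℝ E]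
  {gradF : E → E} {hessF : E → E →L[ℝ] E} {L M : ℝ} {g x y : E} {H : E →L[ℝ] E}

theorem norm_gradient_le_of_cubic_stationary (hhess : ∀ z, HasFDerivAt gradF (hessF z) z)
    (hlip : ∀ z w, ‖hessF z - hessF w‖ ≤ L * ‖z - w‖) (hL : 0 ≤ L) (hM : 0 ≤ M)
    (hstat : g + H (y - x) + (M / 2 * ‖y - x‖) • (y - x) = 0) :
    ‖gradF y‖ ≤ ‖gradF x - g‖ + ‖hessF x - H‖ * ‖y - x‖ + (L + M / 2) * ‖y - x‖ ^ 2 := by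
  set v := y - x
  have hdecomp : gradF y = (gradF y - gradF x - hessF x v) + (gradF x - g) + (hessF x - H) v
      - (M / 2 * ‖v‖) • v := by
    rw [sub_apply]
    linear_combination (norm := module) hstat
  have hrem := norm_sub_sub_apply_le_of_lipschitz_fderiv hhess hlip hL x y
  have hHv : ‖(hessF x - H) v‖ ≤ ‖hessF x - H‖ * ‖v‖ := (hessF x - H).le_opNorm v
  have hstep : ‖(M / 2 * ‖v‖) • v‖ = M / 2 * ‖v‖ ^ 2 := by
    rw [norm_smul, Real.norm_of_nonneg (by positivity)]; ring
  calc ‖gradF y‖ = ‖(gradF y - gradF x - hessF x v) + (gradF x - g) + (hessF x - H) v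
        - (M / 2 * ‖v‖) • v‖ := by rw [← hdecomp]
    _ ≤ ‖gradF y - gradF x - hessF x v‖ + ‖gradF x - g‖ + ‖(hessF x - H) v‖
        + ‖(M / 2 * ‖v‖) • v‖ := (norm_sub_le _ _).trans (add_le_add_left norm_add₃_le _)
    _ ≤ _ := by linarith

end NormedSpace

section CubicModel

variable {E : Type*} [NormedAddCommGroup E] [InnerProductSpace ℝ E]

noncomputable def cubicModel (c : ℝ) (g : E) (H : E →L[ℝ] E) (M : ℝ) (x z : E) : ℝ :=
  c + ⟪g, z - x⟫ + (1 / 2) * ⟪z - x, H (z - x)⟫ + M / 6 * ‖z - x‖ ^ 3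

@[simp]
theorem cubicModel_self (c : ℝ) (g : E) (H : E →L[ℝ] E) (M : ℝ) (x : E) :
    cubicModel c g H M x x = c := by
  simp [cubicModel]

theorem hasFDerivAt_norm_sub_pow_three (x y : E) :
    HasFDerivAt (fun z => ‖z - x‖ ^ 3) ((3 * ‖y - x‖) • innerSL ℝ (y - x)) y := by
  have h := (hasFDerivAt_norm_rpow (y - x) (by norm_num : (1 : ℝ) < 3)).comp y
    ((hasFDerivAt_id y).sub_const x)
  norm_num [Function.comp_def] at h
  simpa [map_sub] using h

theorem hasFDerivAt_cubicModel {H : E →L[ℝ] E} (hH : (H : E →ₗ[ℝ] E).IsSymmetric)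
    (c : ℝ) (g : E) (M : ℝ) (x y : E) :
    HasFDerivAt (cubicModel c g H M x)
      (innerSL ℝ (g + H (y - x) + (M / 2 * ‖y - x‖) • (y - x))) y := by
  have hsub : HasFDerivAt (fun z : E => z - x) (ContinuousLinearMap.id ℝ E) y :=
    (hasFDerivAt_id y).sub_const x
  have hlin := ((innerSL ℝ g).hasFDerivAt (x := y - x)).comp y hsub
  have hquad := hsub.inner ℝ ((H.hasFDerivAt (x := y - x)).comp y hsub)
  refine (((hlin.const_add c).add (hquad.const_mul (1 / 2))).add
    ((hasFDerivAt_norm_sub_pow_three x y).const_mul (M / 6))).congr_fderiv ?_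
  ext w
  simp only [add_apply, smul_apply,
    ContinuousLinearMap.coe_comp, Function.comp_apply, innerSL_apply_apply,
    ContinuousLinearMap.prod_apply, ContinuousLinearMap.coe_id', id_eq,
    fderivInnerCLM_apply, smul_eq_mul, inner_add_left, real_inner_smul_left]
  have hsymm : ⟪y - x, H w⟫ = ⟪H (y - x), w⟫ := (hH (y - x) w).symm
  rw [hsymm, real_inner_comm (H (y - x)) w]
  ring

variable {gradF : E → E} {hessF : E → E →L[ℝ] E} {c L M η : ℝ} {g x y : E} {H : E →L[ℝ] E}

theorem IsMinOn.cubicModel_stationary (hH : (H : E →ₗ[ℝ] E).IsSymmetric)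
    (hmin : IsMinOn (cubicModel c g H M x) (Metric.closedBall x η) y) (hy : ‖y - x‖ < η) :
    g + H (y - x) + (M / 2 * ‖y - x‖) • (y - x) = 0 := by
  have hloc : IsLocalMin (cubicModel c g H M x) y :=
    hmin.isLocalMin (Metric.closedBall_mem_nhds_of_mem (by simpa [dist_eq_norm] using hy))
  have hzero := hloc.hasFDerivAt_eq_zero (hasFDerivAt_cubicModel hH c g M x y)
  have h := DFunLike.congr_fun hzero (g + H (y - x) + (M / 2 * ‖y - x‖) • (y - x))
  rw [innerSL_apply_apply, zero_apply] at h
  exact inner_self_eq_zero.1 h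

theorem IsMinOn.cubicModel_large_gradient (hhess : ∀ z, HasFDerivAt gradF (hessF z) z)
    (hlip : ∀ z w, ‖hessF z - hessF w‖ ≤ L * ‖z - w‖) (hL : 0 ≤ L) (hM : 4 * L ≤ M)
    (hH : (H : E →ₗ[ℝ] E).IsSymmetric) (hmem : y ∈ Metric.closedBall x η)
    (hmin : IsMinOn (cubicModel c g H M x) (Metric.closedBall x η) y)
    (hlarge : M * η ^ 2 / 2 ≤ ‖gradF y‖) :
    M * η ^ 2 / 2 ≤ ‖gradF x - g‖ + ‖hessF x - H‖ * ‖y - x‖ + 3 / 4 * M * ‖y - x‖ ^ 2 := by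
  rw [Metric.mem_closedBall, dist_eq_norm] at hmem
  rcases hmem.eq_or_lt with hη | hlt
  · rw [hη]
    have : 0 ≤ M * η ^ 2 := mul_nonneg (by linarith) (sq_nonneg η)
    nlinarith [norm_nonneg (gradF x - g), norm_nonneg (hessF x - H), norm_nonneg (y - x)]
  · have hgrad := norm_gradient_le_of_cubic_stationary hhess hlip hL (by linarith)
      (hmin.cubicModel_stationary hH hlt)
    nlinarith [sq_nonneg ‖y - x‖]

end CubicModel

section LipschitzHessian

variable {E : Type*} [NormedAddCommGroup E] [InnerProductSpace ℝ E] [CompleteSpace E]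
  {F : E → ℝ} {gradF : E → E} {hessF : E → E →L[ℝ] E} {L M η : ℝ} {g x y : E} {H : E →L[ℝ] E}

theorem le_taylor_two_of_lipschitz_hessian (hgrad : ∀ z, HasGradientAt F (gradF z) z)
    (hhess : ∀ z, HasFDerivAt gradF (hessF z) z)
    (hlip : ∀ z w, ‖hessF z - hessF w‖ ≤ L * ‖z - w‖) (hL : 0 ≤ L) (a w : E) :
    F (a + w) ≤ F a + ⟪gradF a, w⟫ + 1 / 2 * ⟪w, hessF a w⟫ + L / 3 * ‖w‖ ^ 3 := by
  -- the cubic Taylor remainder along `t ↦ a + t • w` is antitone on `[0, 1]`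
  set ψ : ℝ → ℝ := fun t => F (a + t • w) - t * ⟪gradF a, w⟫ - t ^ 2 / 2 * ⟪w, hessF a w⟫
      - t ^ 3 * (L / 3) * ‖w‖ ^ 3
  have hψ : ∀ t : ℝ, HasDerivAt ψ
      (⟪gradF (a + t • w) - gradF a - hessF a (t • w), w⟫ - t ^ 2 * L * ‖w‖ ^ 3) t := by
    intro t
    have hline : HasDerivAt (fun t : ℝ => a + t • w) w t := by
      simpa using ((hasDerivAt_id t).smul_const w).const_add a
    have hF : HasDerivAt (fun t : ℝ => F (a + t • w)) ⟪gradF (a + t • w), w⟫ t := by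
      simpa [Function.comp_def] using (hgrad (a + t • w)).hasFDerivAt.comp_hasDerivAt t hline
    refine (((hF.sub ((hasDerivAt_id t).mul_const ⟪gradF a, w⟫)).sub
      (((hasDerivAt_pow 2 t).div_const 2).mul_const ⟪w, hessF a w⟫)).sub
      (((hasDerivAt_pow 3 t).mul_const (L / 3)).mul_const (‖w‖ ^ 3))).congr_deriv ?_
    simp only [real_inner_comm w, map_smul, inner_sub_right, real_inner_smul_right]
    push_cast
    ring
  have hanti : AntitoneOn ψ (Set.Icc 0 1) := by
    refine antitoneOn_of_deriv_nonpos (convex_Icc 0 1)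
      (fun t _ => (hψ t).continuousAt.continuousWithinAt)
      (fun t _ => (hψ t).differentiableAt.differentiableWithinAt) fun t _ => ?_
    rw [(hψ t).deriv, sub_nonpos]
    calc ⟪gradF (a + t • w) - gradF a - hessF a (t • w), w⟫
        ≤ ‖gradF (a + t • w) - gradF a - hessF a (t • w)‖ * ‖w‖ := real_inner_le_norm _ _
      _ ≤ L * ‖t • w‖ ^ 2 * ‖w‖ := by
        gcongr
        simpa using norm_sub_sub_apply_le_of_lipschitz_fderiv hhess hlip hL a (a + t • w)
      _ = t ^ 2 * L * ‖w‖ ^ 3 := by rw [norm_smul, Real.norm_eq_abs, mul_pow, sq_abs]; ring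
  have h01 := hanti (by simp) (by simp) zero_le_one
  simp only [ψ, zero_smul, add_zero, one_smul] at h01
  linarith

theorem le_sub_of_cubicModel_le (hgrad : ∀ z, HasGradientAt F (gradF z) z)
    (hhess : ∀ z, HasFDerivAt gradF (hessF z) z)
    (hlip : ∀ z w, ‖hessF z - hessF w‖ ≤ L * ‖z - w‖) (hL : 0 ≤ L) (hM : 4 * L ≤ M)
    (hdecr : cubicModel (F x) g H M x y ≤ F x) :
    M * ‖y - x‖ ^ 3 / 24 - ‖gradF x - g‖ * ‖y - x‖ - ‖hessF x - H‖ * ‖y - x‖ ^ 2 / 2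
      ≤ F x - F y := by
  set v := y - x
  have htaylor := le_taylor_two_of_lipschitz_hessian hgrad hhess hlip hL x v
  rw [add_sub_cancel] at htaylor
  have hg : ⟪gradF x - g, v⟫ ≤ ‖gradF x - g‖ * ‖v‖ := real_inner_le_norm _ _
  have hH : ⟪v, (hessF x - H) v⟫ ≤ ‖hessF x - H‖ * ‖v‖ ^ 2 :=
    calc ⟪v, (hessF x - H) v⟫ ≤ ‖v‖ * ‖(hessF x - H) v‖ := real_inner_le_norm _ _
      _ ≤ ‖v‖ * (‖hessF x - H‖ * ‖v‖) := by gcongr; exact (hessF x - H).le_opNorm v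
      _ = ‖hessF x - H‖ * ‖v‖ ^ 2 := by ring
  have hcube : 0 ≤ (M / 8 - L / 3) * ‖v‖ ^ 3 := mul_nonneg (by linarith) (by positivity)
  simp only [cubicModel] at hdecr
  rw [inner_sub_left] at hg
  rw [sub_apply, inner_sub_right] at hH
  linarith

theorem IsMinOn.cubicModel_descent (hgrad : ∀ z, HasGradientAt F (gradF z) z)
    (hhess : ∀ z, HasFDerivAt gradF (hessF z) z)
    (hlip : ∀ z w, ‖hessF z - hessF w‖ ≤ L * ‖z - w‖) (hL : 0 ≤ L) (hM : 4 * L ≤ M)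
    (hM0 : 0 < M) (hη : 0 < η) (hH : (H : E →ₗ[ℝ] E).IsSymmetric)
    (hmem : y ∈ Metric.closedBall x η)
    (hmin : IsMinOn (cubicModel (F x) g H M x) (Metric.closedBall x η) y) :
    (if M * η ^ 2 / 2 ≤ ‖gradF y‖ then M * η ^ 3 / 60 else 0)
        - 9 / √M * (‖gradF x - g‖ ^ 2) ^ ((3 : ℝ) / 4)
        - 5 * η ^ ((3 : ℝ) / 2) / √M * (‖hessF x - H‖ ^ 2) ^ ((3 : ℝ) / 4)
      ≤ F x - F y := by
  have hdecr := le_sub_of_cubicModel_le hgrad hhess hlip hL hM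
    (by simpa using isMinOn_iff.1 hmin x (Metric.mem_closedBall_self hη.le))
  have hsη : ‖y - x‖ ≤ η := by rwa [Metric.mem_closedBall, dist_eq_norm] at hmem
  split_ifs with hlarge
  · exact (cubic_descent_bound_of_le hM0 hη (norm_nonneg _) hsη (norm_nonneg _) (norm_nonneg _)
      (hmin.cubicModel_large_gradient hhess hlip hL hM hH hmem hlarge)).trans hdecr
  · have := cubic_descent_bound hM0 hη (norm_nonneg _) hsη (norm_nonneg (gradF x - g))
      (norm_nonneg (hessF x - H))
    linarith

end LipschitzHessian

section Probability

variable {Ω : Type*} [MeasurableSpace Ω] {μ : Measure Ω} {Z : Ω → ℝ} {p : ℝ}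

theorem MeasureTheory.Integrable.rpow_of_le_one [IsFiniteMeasure μ] (hp0 : 0 ≤ p) (hp1 : p ≤ 1)
    (hZ0 : 0 ≤ᵐ[μ] Z) (hZ : Integrable Z μ) : Integrable (fun ω => Z ω ^ p) μ := by
  refine ((integrable_const 1).add hZ).mono'
    ((Real.continuous_rpow_const hp0).comp_aestronglyMeasurable hZ.1) ?_
  filter_upwards [hZ0] with ω (hω : 0 ≤ Z ω)
  rw [Real.norm_of_nonneg (Real.rpow_nonneg hω p), Pi.add_apply]
  rcases le_total (Z ω) 1 with h | h
  · linarith [Real.rpow_le_one hω h hp0]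
  · linarith [Real.rpow_le_self_of_one_le h hp1]

theorem integral_rpow_le_rpow_integral [IsProbabilityMeasure μ] (hp0 : 0 ≤ p) (hp1 : p ≤ 1)
    (hZ0 : 0 ≤ᵐ[μ] Z) (hZ : Integrable Z μ) : ∫ ω, Z ω ^ p ∂μ ≤ (∫ ω, Z ω ∂μ) ^ p :=
  (Real.concaveOn_rpow hp0 hp1).le_map_integral (Real.continuous_rpow_const hp0).continuousOn
    isClosed_Ici hZ0 hZ (hZ.rpow_of_le_one hp0 hp1 hZ0)

theorem mul_measureReal_le_integral_add [IsFiniteMeasure μ] {X R : Ω → ℝ} {A : Set Ω} {c : ℝ}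
    (hc : 0 ≤ c) (hX : Integrable X μ) (hR : Integrable R μ) (hle : ∀ ω, -R ω ≤ X ω)
    (hA : ∀ ω ∈ A, c - R ω ≤ X ω) :
    c * μ.real A ≤ ∫ ω, X ω ∂μ + ∫ ω, R ω ∂μ := by
  have hsub : A ⊆ {ω | c ≤ X ω + R ω} := fun ω hω =>
    show c ≤ X ω + R ω by linarith [hA ω hω]
  have hnonneg : 0 ≤ᵐ[μ] fun ω => X ω + R ω := ae_of_all _ fun ω =>
    show 0 ≤ X ω + R ω by linarith [hle ω]
  rw [← integral_add hX hR]
  exact (mul_le_mul_of_nonneg_left (measureReal_mono hsub) hc).trans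
    (mul_meas_ge_le_integral_of_nonneg hnonneg (hX.add hR) c)

end Probability

theorem stmt_3_general {d : ℕ} {Ω : Type*} [MeasurableSpace Ω]
    (μ : Measure Ω) [IsProbabilityMeasure μ]
    (F : EuclideanSpace ℝ (Fin d) → ℝ)
    (gradF : EuclideanSpace ℝ (Fin d) → EuclideanSpace ℝ (Fin d))
    (hessF : EuclideanSpace ℝ (Fin d) →
      EuclideanSpace ℝ (Fin d) →L[ℝ] EuclideanSpace ℝ (Fin d))
    (L₂ : ℝ) (hL₂ : 0 < L₂)
    (hgrad : ∀ z, HasGradientAt F (gradF z) z)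
    (hhess : ∀ z, HasFDerivAt gradF (hessF z) z)
    (hlip : ∀ z w, ‖hessF z - hessF w‖ ≤ L₂ * ‖z - w‖)
    (x : EuclideanSpace ℝ (Fin d))
    (M η : ℝ) (hM : M ≥ 4 * L₂) (hη : 0 < η)
    (g : Ω → EuclideanSpace ℝ (Fin d))
    (H : Ω → EuclideanSpace ℝ (Fin d) →L[ℝ] EuclideanSpace ℝ (Fin d))
    (hHsymm : ∀ ω v w, ⟪H ω v, w⟫ = ⟪v, H ω w⟫)
    (hg2 : Integrable (fun ω => ‖gradF x - g ω‖ ^ 2) μ)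
    (hH2 : Integrable (fun ω => ‖hessF x - H ω‖ ^ 2) μ)
    (y : Ω → EuclideanSpace ℝ (Fin d))
    (hy_mem : ∀ ω, y ω ∈ Metric.closedBall x η)
    (hy_min : ∀ ω, IsMinOn
      (fun z => F x + ⟪g ω, z - x⟫ + (1 / 2) * ⟪z - x, H ω (z - x)⟫ + M / 6 * ‖z - x‖ ^ 3)
      (Metric.closedBall x η) (y ω))
    (hFy : Integrable (fun ω => F (y ω)) μ) :
    ∫ ω, (F x - F (y ω)) ∂μ ≥
      M * η ^ 3 / 60 * (μ {ω | ‖gradF (y ω)‖ ≥ M * η ^ 2 / 2}).toReal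
      - 9 / Real.sqrt M * (∫ ω, ‖gradF x - g ω‖ ^ 2 ∂μ) ^ ((3 : ℝ) / 4)
      - 5 * η ^ ((3 : ℝ) / 2) / Real.sqrt M
          * (∫ ω, ‖hessF x - H ω‖ ^ 2 ∂μ) ^ ((3 : ℝ) / 4) := by
  have hM0 : 0 < M := by linarith
  have hdescent ω := (hy_min ω).cubicModel_descent hgrad hhess hlip hL₂.le hM hM0 hη
    (hHsymm ω) (hy_mem ω)
  set cg := 9 / √M
  set cH := 5 * η ^ ((3 : ℝ) / 2) / √M
  have hg0 : 0 ≤ᵐ[μ] fun ω => ‖gradF x - g ω‖ ^ 2 := ae_of_all _ fun ω => sq_nonneg _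
  have hH0 : 0 ≤ᵐ[μ] fun ω => ‖hessF x - H ω‖ ^ 2 := ae_of_all _ fun ω => sq_nonneg _
  have hg34 := (hg2.rpow_of_le_one (p := 3 / 4) (by norm_num) (by norm_num) hg0).const_mul cg
  have hH34 := (hH2.rpow_of_le_one (p := 3 / 4) (by norm_num) (by norm_num) hH0).const_mul cH
  have hmarkov := mul_measureReal_le_integral_add (A := {ω | ‖gradF (y ω)‖ ≥ M * η ^ 2 / 2})
    (X := fun ω => F x - F (y ω)) (c := M * η ^ 3 / 60)
    (R := fun ω => cg * (‖gradF x - g ω‖ ^ 2) ^ ((3 : ℝ) / 4)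
      + cH * (‖hessF x - H ω‖ ^ 2) ^ ((3 : ℝ) / 4)) (by positivity)
    ((integrable_const (F x)).sub hFy) (hg34.add hH34)
    (fun ω => by
      have := hdescent ω
      have : 0 ≤ M * η ^ 3 / 60 := by positivity
      split_ifs at * <;> linarith)
    (fun ω (hω : M * η ^ 2 / 2 ≤ _) => by
      have := hdescent ω
      rw [if_pos hω] at this
      linarith)
  rw [integral_add hg34 hH34, integral_const_mul, integral_const_mul] at hmarkov
  have hjensen_g := mul_le_mul_of_nonneg_left (integral_rpow_le_rpow_integral (p := 3 / 4)
    (by norm_num) (by norm_num) hg0 hg2) (by positivity : 0 ≤ cg)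
  have hjensen_H := mul_le_mul_of_nonneg_left (integral_rpow_le_rpow_integral (p := 3 / 4)
    (by norm_num) (by norm_num) hH0 hH2) (by positivity : 0 ≤ cH)
  rw [ge_iff_le, ← measureReal_def]
  linarith

/-- Expected descent for the cubic-regularized trust-region step with random
gradient/Hessian estimates `g`, `H`:
`E[F(x) - F(y)] ≥ (Mη³/60)·P(‖∇F(y)‖ ≥ Mη²/2) - (9/√M)(E‖∇F(x)-g‖²)^{3/4}
  - (5η^{3/2}/√M)(E‖∇²F(x)-H‖_op²)^{3/4}`. -/
theorem stmt_3 {d : ℕ} {Ω : Type*} [MeasurableSpace Ω]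
    (μ : Measure Ω) [IsProbabilityMeasure μ]
    (F : EuclideanSpace ℝ (Fin d) → ℝ)
    (gradF : EuclideanSpace ℝ (Fin d) → EuclideanSpace ℝ (Fin d))
    (hessF : EuclideanSpace ℝ (Fin d) →
      EuclideanSpace ℝ (Fin d) →L[ℝ] EuclideanSpace ℝ (Fin d))
    (L₂ : ℝ) (hL₂ : 0 < L₂)
    (hgrad : ∀ z, HasGradientAt F (gradF z) z)
    (hhess : ∀ z, HasFDerivAt gradF (hessF z) z)
    (hlip : ∀ z w, ‖hessF z - hessF w‖ ≤ L₂ * ‖z - w‖)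
    (x : EuclideanSpace ℝ (Fin d))
    (M η : ℝ) (hM : M ≥ 4 * L₂) (hη : 0 < η)
    (g : Ω → EuclideanSpace ℝ (Fin d))
    (H : Ω → EuclideanSpace ℝ (Fin d) →L[ℝ] EuclideanSpace ℝ (Fin d))
    (hHsymm : ∀ ω v w, ⟪H ω v, w⟫ = ⟪v, H ω w⟫)
    (hg_meas : Measurable g) (hH_meas : Measurable H)
    (hg2 : Integrable (fun ω => ‖gradF x - g ω‖ ^ 2) μ)
    (hH2 : Integrable (fun ω => ‖hessF x - H ω‖ ^ 2) μ)
    (y : Ω → EuclideanSpace ℝ (Fin d)) (hy_meas : Measurable y)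
    (hy_mem : ∀ ω, y ω ∈ Metric.closedBall x η)
    (hy_min : ∀ ω, IsMinOn
      (fun z => F x + ⟪g ω, z - x⟫ + (1 / 2) * ⟪z - x, H ω (z - x)⟫ + M / 6 * ‖z - x‖ ^ 3)
      (Metric.closedBall x η) (y ω))
    (hFy : Integrable (fun ω => F (y ω)) μ) :
    ∫ ω, (F x - F (y ω)) ∂μ ≥
      M * η ^ 3 / 60 * (μ {ω | ‖gradF (y ω)‖ ≥ M * η ^ 2 / 2}).toReal
      - 9 / Real.sqrt M * (∫ ω, ‖gradF x - g ω‖ ^ 2 ∂μ) ^ ((3 : ℝ) / 4)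
      - 5 * η ^ ((3 : ℝ) / 2) / Real.sqrt M
          * (∫ ω, ‖hessF x - H ω‖ ^ 2 ∂μ) ^ ((3 : ℝ) / 4) :=
  stmt_3_general μ F gradF hessF L₂ hL₂ hgrad hhess hlip x M η hM hη g H hHsymm hg2 hH2 y hy_mem
    hy_min hFy
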